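/- Let X be a metric space with |X| ≥ 3 in which every point is an accumulation point, and let T : X → X be a continuous Kannan-type perimetric contraction on k-polygons with coefficient μ ∈ [0, 2/k) (3 ≤ k ≤ |X|). Then T is a Kannan-type contraction with coefficient kμ/4 ∈ [0, 1/2), i.e., d(Tz,Ty) ≤ (kμ/4)(d(z,Tz) + d(y,Ty)) for all z,y ∈ X. -/

import Mathlib

noncomputable def perim {X : Type*} [MetricSpace X] {k : ℕ} [NeZero k] (x : Fin k → X) : ℝ :=
  ∑ i : Fin k, dist (x i) (x (i + 1))

open Fin.NatCast in
lemma two_dist_le_perim {X : Type*} [MetricSpace X] {k : ℕ} [NeZero k] (hk : 3 ≤ k)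
    (w : Fin k → X) : 2 * dist (w 0) (w 1) ≤ perim w := by
  obtain ⟨m, hm⟩ : ∃ m, k = m + 2 := ⟨k - 2, by omega⟩
  set f : ℕ → ℝ := fun n => dist (w n) (w (n + 1)) with hf
  have hsum : perim w = ∑ i ∈ Finset.range k, f i := by
    rw [perim, ← Fin.sum_univ_eq_sum_range f k]
    apply Finset.sum_congr rfl
    intro i _
    simp [hf, Fin.cast_val_eq_self]
  have hsplit : ∑ i ∈ Finset.range k, f i
      = (∑ i ∈ Finset.range (m + 1), f (i + 1)) + f 0 := by
    rw [hm, Finset.sum_range_succ']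
  set g : ℕ → X := fun n => w ((n + 1 : ℕ) : Fin k) with hg
  have htail : dist (g 0) (g (m + 1)) ≤ ∑ i ∈ Finset.range (m + 1), f (i + 1) := by
    have := dist_le_range_sum_dist g (m + 1)
    refine this.trans_eq ?_
    apply Finset.sum_congr rfl
    intro i _
    simp [hg, hf]
  have hg0 : g 0 = w 1 := by simp [hg]
  have hgm : g (m + 1) = w 0 := by
    have : ((m + 2 : ℕ) : Fin k) = 0 := by
      rw [← hm]; exact Fin.natCast_self k
    simp only [hg]
    rw [show m + 1 + 1 = m + 2 from rfl, this]
  have hf0 : f 0 = dist (w 0) (w 1) := by simp [hf]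
  rw [hsum, hsplit]
  rw [hg0, hgm, dist_comm] at htail
  linarith

open Fin.NatCast in
lemma key_est {X : Type*} [MetricSpace X] {k : ℕ} [NeZero k] (hk : 3 ≤ k)
    (T : X → X) (hcont : Continuous T)
    (μ : ℝ) (hμ0 : 0 ≤ μ)
    (hT : ∀ x : Fin k → X, Function.Injective x →
      perim (T ∘ x) ≤ μ * ∑ i : Fin k, dist (x i) (T (x i)))
    (hacc : ∀ x : X, ∀ ε > 0, (Metric.ball x ε).Infinite)
    (z y : X) (hzy : z ≠ y) :
    2 * dist (T z) (T y) ≤ μ * (((k : ℝ) - 1) * dist z (T z) + dist y (T y)) := by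
  obtain ⟨m, hm⟩ : ∃ m, k = m + 2 := ⟨k - 2, by omega⟩
  have hmr : (m : ℝ) = (k : ℝ) - 2 := by
    have : (k : ℝ) = (m : ℝ) + 2 := by exact_mod_cast congrArg (Nat.cast : ℕ → ℝ) hm
    linarith
  set u := dist z (T z) with hu
  set v := dist y (T y) with hv
  set c : ℝ := μ * (2 * ((k : ℝ) - 2)) with hc
  have hc0 : 0 ≤ c := by
    have : (3 : ℝ) ≤ (k : ℝ) := by exact_mod_cast hk
    have h2 : (0:ℝ) ≤ 2 * ((k:ℝ) - 2) := by linarith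
    exact mul_nonneg hμ0 h2
  apply le_of_forall_pos_le_add
  intro ε hε
  set η : ℝ := ε / (c + 1) with hη
  have hη0 : 0 < η := by positivity
  have hcη : c * η ≤ ε := by
    have h1 : c * η ≤ (c + 1) * η := by nlinarith
    have h2 : (c + 1) * η = ε := by
      rw [hη]; field_simp
    linarith
  -- continuity at z
  obtain ⟨δ, hδ0, hδ⟩ : ∃ δ > 0, ∀ {x : X}, dist x z < δ → dist (T x) (T z) < η :=
    Metric.continuousAt_iff.mp hcont.continuousAt η hη0
  set r := min δ η with hr
  have hr0 : 0 < r := lt_min hδ0 hη0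
  have hSinf : (Metric.ball z r \ {z, y}).Infinite :=
    (hacc z r hr0).diff ((Set.finite_singleton y).insert z)
  set emb := hSinf.natEmbedding with hemb
  set e : ℕ → X := fun n => (emb n : X) with he
  have heS : ∀ n, e n ∈ Metric.ball z r \ {z, y} := fun n => (emb n).2
  have heball : ∀ n, dist (e n) z < r := by
    intro n; have := (heS n).1; simpa [Metric.mem_ball] using this
  have henzy : ∀ n, e n ≠ z ∧ e n ≠ y := by
    intro n; have := (heS n).2; simp [Set.mem_insert_iff] at this; exact this
  have heinj : ∀ a b, e a = e b → a = b := by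
    intro a b h
    exact emb.injective (Subtype.ext h)
  set x : Fin k → X := fun i => if i.val = 0 then z else if i.val = 1 then y else e (i.val - 2)
    with hx
  have hinj : Function.Injective x := by
    intro i j hij
    simp only [hx] at hij
    apply Fin.ext
    split_ifs at hij with h1 h2 h3 h4 h5 h6 h7 h8 h9
    all_goals first
      | omega
      | (exact absurd hij hzy)
      | (exact absurd hij.symm hzy)
      | (exact absurd hij.symm (henzy _).1)
      | (exact absurd hij (henzy _).1)
      | (exact absurd hij.symm (henzy _).2)
      | (exact absurd hij (henzy _).2)
      | (have := heinj _ _ hij; omega)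
  have h1lt : (1 : ℕ) < k := by omega
  have hx0 : x 0 = z := by simp [hx]
  have hv1 : (1 : Fin k).val = 1 := by
    rw [← Nat.cast_one, Fin.val_cast_of_lt h1lt]
  have hx1 : x 1 = y := by
    simp only [hx]
    rw [hv1]
    norm_num
  set f2 : ℕ → ℝ := fun n => dist (x n) (T (x n)) with hf2
  have hsum : ∑ i : Fin k, dist (x i) (T (x i)) = ∑ i ∈ Finset.range k, f2 i := by
    rw [← Fin.sum_univ_eq_sum_range f2 k]
    apply Finset.sum_congr rfl
    intro i _
    simp [hf2, Fin.cast_val_eq_self]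
  have hsplit : ∑ i ∈ Finset.range k, f2 i
      = (∑ i ∈ Finset.range m, f2 (i + 2)) + f2 1 + f2 0 := by
    rw [hm, Finset.sum_range_succ', Finset.sum_range_succ']
  have hf20 : f2 0 = u := by simp [hf2, hx0, hu]
  have hf21 : f2 1 = v := by
    have : ((1 : ℕ) : Fin k) = 1 := Nat.cast_one
    simp [hf2, this, hx1, hv]
  have hterm : ∀ i ∈ Finset.range m, f2 (i + 2) ≤ u + 2 * η := by
    intro i hi
    have him : i < m := Finset.mem_range.mp hi
    have hvlt : ((i + 2 : ℕ) : Fin k).val = i + 2 := Fin.val_cast_of_lt (by omega)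
    have hxi : x ((i + 2 : ℕ) : Fin k) = e i := by
      simp only [hx]
      rw [hvlt, if_neg (by omega : ¬(i + 2 = 0)), if_neg (by omega : ¬(i + 2 = 1))]
      congr 1
    have hball : dist (e i) z < r := heball i
    have h1 : dist (e i) z < η := lt_of_lt_of_le hball (min_le_right _ _)
    have h2 : dist (T (e i)) (T z) < η := hδ (lt_of_lt_of_le hball (min_le_left _ _))
    have htri : dist (e i) (T (e i)) ≤ dist (e i) z + dist z (T z) + dist (T z) (T (e i)) :=
      dist_triangle4 _ _ _ _
    rw [dist_comm (T z) (T (e i))] at htri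
    simp only [hf2, hxi]
    linarith [htri, h1, h2]
  have hsumtail : ∑ i ∈ Finset.range m, f2 (i + 2) ≤ (m : ℝ) * (u + 2 * η) := by
    calc ∑ i ∈ Finset.range m, f2 (i + 2) ≤ ∑ _i ∈ Finset.range m, (u + 2 * η) :=
          Finset.sum_le_sum hterm
      _ = (m : ℝ) * (u + 2 * η) := by
          rw [Finset.sum_const, Finset.card_range, nsmul_eq_mul]
  have htotal : ∑ i : Fin k, dist (x i) (T (x i)) ≤ ((k : ℝ) - 1) * u + v + 2 * ((k:ℝ) - 2) * η := by
    rw [hsum, hsplit, hf20, hf21]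
    have : (m : ℝ) * (u + 2 * η) = ((k:ℝ) - 2) * u + 2 * ((k:ℝ) - 2) * η := by
      rw [hmr]; ring
    linarith [hsumtail]
  have hperim : 2 * dist (T z) (T y) ≤ perim (T ∘ x) := by
    have := two_dist_le_perim hk (T ∘ x)
    simpa [Function.comp, hx0, hx1] using this
  have hμsum : μ * (∑ i : Fin k, dist (x i) (T (x i)))
      ≤ μ * (((k : ℝ) - 1) * u + v + 2 * ((k:ℝ) - 2) * η) :=
    mul_le_mul_of_nonneg_left htotal hμ0
  have hTx := hT x hinj
  have : μ * (((k : ℝ) - 1) * u + v + 2 * ((k:ℝ) - 2) * η)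
      = μ * (((k : ℝ) - 1) * u + v) + c * η := by rw [hc]; ring
  linarith [hperim, hTx, hμsum, hcη]

theorem stmt12 {X : Type*} [MetricSpace X] {k : ℕ} [NeZero k] (hk : 3 ≤ k)
    (hX : ∃ f : Fin k → X, Function.Injective f)
    (T : X → X) (hcont : Continuous T)
    (μ : ℝ) (hμ0 : 0 ≤ μ) (hμ1 : μ < 2 / (k : ℝ))
    (hT : ∀ x : Fin k → X, Function.Injective x →
      perim (T ∘ x) ≤ μ * ∑ i : Fin k, dist (x i) (T (x i)))
    (hacc : ∀ x : X, ∀ ε > 0, (Metric.ball x ε).Infinite) :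
    0 ≤ (k : ℝ) * μ / 4 ∧ (k : ℝ) * μ / 4 < 1 / 2 ∧
      ∀ z y : X, dist (T z) (T y) ≤ ((k : ℝ) * μ / 4) * (dist z (T z) + dist y (T y)) := by
  have hk0 : (0 : ℝ) < (k : ℝ) := by
    have : 0 < k := by omega
    exact_mod_cast this
  have hkμ : (k : ℝ) * μ < 2 := by
    have := (lt_div_iff₀ hk0).mp hμ1
    linarith
  have h04 : 0 ≤ (k : ℝ) * μ / 4 := by positivity
  refine ⟨h04, by linarith, ?_⟩
  intro z y
  by_cases hzy : z = y
  · subst hzy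
    simp only [dist_self]
    have : 0 ≤ dist z (T z) + dist z (T z) := by positivity
    nlinarith
  · have h1 := key_est hk T hcont μ hμ0 hT hacc z y hzy
    have h2 := key_est hk T hcont μ hμ0 hT hacc y z (Ne.symm hzy)
    rw [dist_comm (T y) (T z)] at h2
    set u := dist z (T z)
    set v := dist y (T y)
    have hid : μ * (((k : ℝ) - 1) * u + v) + μ * (((k : ℝ) - 1) * v + u)
        = (k : ℝ) * μ * (u + v) := by ring
    have hid2 : ((k : ℝ) * μ / 4) * (u + v) * 4 = (k : ℝ) * μ * (u + v) := by ring
    linarith
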